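/- arXiv:1007.0508 — 4 statements merged into one kernel-verified Lean document; each statement's English description precedes it below -/
import Mathlib

section
/- Let k be a field of characteristic zero and B = k[X,Y] the polynomial ring in two variables over k. Then there exists a degree function deg : B → ℤ ∪ {−∞} such that deg(λ) = 0 for all λ ∈ k \ {0}, and such that the only k-derivation D : B → B for which deg(D) is defined is the zero derivation. -/
section DegreePrelude

variable {B : Type*} [CommRing B] {G : Type*} [AddCommGroup G] [LinearOrder G] [IsOrderedAddMonoid G]

/-- A degree function on `B` with values in `G ∪ {-∞}` -/
def IsDegreeFunction (deg : B → WithBot G) : Prop :=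
  (∀ x : B, deg x = ⊥ ↔ x = 0) ∧
  (∀ x y : B, deg (x * y) = deg x + deg y) ∧
  (∀ x y : B, deg (x + y) ≤ max (deg x) (deg y))

/-- `degDelta deg D x = deg (D x) - deg x` (with value `-∞` if `D x = 0`). -/
noncomputable def degDelta (deg : B → WithBot G) (D : B → B) (x : B) : WithBot G :=
  (deg (D x)).map fun a => a - (deg x).unbotD 0

/-- The set `{deg (D x) - deg x : x ∈ B \ {0}}`. -/
def degDeltaSet (deg : B → WithBot G) (D : B → B) : Set (WithBot G) :=
  {m | ∃ x : B, x ≠ 0 ∧ degDelta deg D x = m}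

/-- `deg (D)` is defined, i.e. the set `{deg (D x) - deg x : x ≠ 0}` has a
greatest element in `G ∪ {-∞}`. -/
def DegreeDefinedAt (deg : B → WithBot G) (D : B → B) : Prop :=
  ∃ M, IsGreatest (degDeltaSet deg D) M

end DegreePrelude

/-
Send `X ↦ t` and `Y ↦ s = ∑ₙ t ^ (n + 1)!` into `k⟦t⟧` and put `deg p = -ord_t p(t, s)`. This is a
degree function because `s` is transcendental over `k(t)`: if `p(t, s) = 0`, then for the partial
sums `σₙ` the polynomial `p(t, σₙ)` has degree `O(n!)` but vanishes to order `(n + 1)!`, so it is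
zero for large `n`, and `p` has infinitely many roots `Y = σₙ`.

Let `D` be a derivation, `f = D X`, `g = D Y`, and `pₙ = Y - σₙ(X)`, so `deg pₙ = -(n + 1)!` and
`D pₙ ↦ (g - s' f)(t, s) + (s - σₙ)' f(t, s)`. If `g(t, s) ≠ s' f(t, s)`, then `deg (D pₙ)` is
eventually constant and `deg (D pₙ) - deg pₙ` is unbounded. If `g(t, s) = s' f(t, s)` (the one case
in which `deg D` would be defined), lacunarity makes the `σₙ` eventually exact solutions of
`σ' f(t, σ) = g(t, σ)`. Comparing the first-order Taylor expansions at three consecutive `σₙ` gives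
`((n + 2)! - (n + 1)!) f(t, σₙ₊₁) ≡ 0` modulo `t ^ (n + 1)!`; since the gaps are distinct in
characteristic zero, `f(t, s)` is divisible by arbitrarily high powers of `t`, so `f = 0`, then
`g = 0`, and `D = 0`.
-/

open Filter MvPolynomial
open scoped Nat Polynomial PowerSeries

lemma IsDegreeFunction.comp_injective {A B G : Type*} [CommRing A] [CommRing B] [AddCommGroup G]
    [LinearOrder G] [IsOrderedAddMonoid G] {deg : A → WithBot G} (hdeg : IsDegreeFunction deg)
    (f : B →+* A) (hf : Function.Injective f) : IsDegreeFunction (deg ∘ f) := by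
  obtain ⟨hbot, hmul, hadd⟩ := hdeg
  refine ⟨fun x ↦ ?_, fun x y ↦ ?_, fun x y ↦ ?_⟩
  · simp [hbot, map_eq_zero_iff f hf]
  · simp [hmul]
  · simpa using hadd (f x) (f y)

lemma not_degreeDefinedAt_of_forall_exists_lt {B G : Type*} [CommRing B] [AddCommGroup G]
    [LinearOrder G] [IsOrderedAddMonoid G] {deg : B → WithBot G} {D : B → B}
    (h : ∀ m : G, ∃ x ≠ 0, (m : WithBot G) < degDelta deg D x) :
    ¬ DegreeDefinedAt deg D := by
  rintro ⟨M, -, hM⟩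
  obtain ⟨m, hm⟩ : ∃ m : G, M ≤ m := by
    induction M with
    | bot => exact ⟨0, bot_le⟩
    | coe m => exact ⟨m, le_rfl⟩
  obtain ⟨x, hx, hlt⟩ := h m
  exact (hlt.trans_le ((hM ⟨x, hx, rfl⟩).trans hm)).false

noncomputable section

namespace LacunaryDegree

section General

variable {R : Type*} [CommRing R]

lemma dvd_aeval_sub_aeval {ι A : Type*} [CommRing A] [Algebra R A] {x y : ι → A} {a : A}
    (h : ∀ i, a ∣ x i - y i) (p : MvPolynomial ι R) : a ∣ aeval x p - aeval y p := by
  induction p using MvPolynomial.induction_on with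
  | C r => simp
  | add p q hp hq =>
    simpa only [map_add, add_sub_add_comm] using dvd_add hp hq
  | mul_X p i hp =>
    have : aeval x (p * X i) - aeval y (p * X i)
        = (aeval x p - aeval y p) * x i + aeval y p * (x i - y i) := by
      simp only [map_mul, aeval_X]
      ring
    rw [this]
    exact dvd_add (hp.mul_right _) ((h i).mul_left _)

lemma exists_natDegree_aeval_le {ι : Type*} (p : MvPolynomial ι R) :
    ∃ d, ∀ (x : ι → R[X]) (e : ℕ), (∀ i, (x i).natDegree ≤ e) →
      (aeval x p).natDegree ≤ d * e := by
  induction p using MvPolynomial.induction_on with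
  | C r => exact ⟨0, fun x e _ ↦ by simp⟩
  | add p q hp hq =>
    obtain ⟨d₁, h₁⟩ := hp
    obtain ⟨d₂, h₂⟩ := hq
    refine ⟨max d₁ d₂, fun x e hx ↦ ?_⟩
    rw [map_add]
    refine (Polynomial.natDegree_add_le _ _).trans (max_le ?_ ?_)
    · exact (h₁ x e hx).trans (Nat.mul_le_mul_right _ (le_max_left _ _))
    · exact (h₂ x e hx).trans (Nat.mul_le_mul_right _ (le_max_right _ _))
  | mul_X p i hp =>
    obtain ⟨d, hd⟩ := hp
    refine ⟨d + 1, fun x e hx ↦ ?_⟩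
    rw [map_mul, aeval_X, add_mul, one_mul]
    exact Polynomial.natDegree_mul_le.trans (add_le_add (hd x e hx) (hx i))

lemma eq_zero_of_X_pow_dvd_coe {p : R[X]} {N : ℕ} (h : PowerSeries.X ^ N ∣ (p : R⟦X⟧))
    (hp : p.natDegree < N) : p = 0 := by
  ext j
  rw [Polynomial.coeff_zero]
  rcases lt_or_ge j N with hj | hj
  · simpa [Polynomial.coeff_coe] using PowerSeries.X_pow_dvd_iff.1 h j hj
  · exact Polynomial.coeff_eq_zero_of_natDegree_lt (by omega)

lemma X_pow_sub_one_dvd_derivative {f : R⟦X⟧} {n : ℕ} (h : PowerSeries.X ^ n ∣ f) :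
    PowerSeries.X ^ (n - 1) ∣ PowerSeries.derivative R f := by
  refine PowerSeries.X_pow_dvd_iff.2 fun j hj ↦ ?_
  rw [PowerSeries.coeff_derivative, PowerSeries.X_pow_dvd_iff.1 h (j + 1) (by omega), zero_mul]

lemma exists_taylor_of_eval_eq {P Q : R[X]} {y y' u v : R}
    (h₀ : P.eval y = y' * Q.eval y) (h₁ : P.eval (y + u) = (y' + v) * Q.eval (y + u)) :
    ∃ K, v * Q.eval (y + u) =
      u * (P.derivative.eval y - y' * Q.derivative.eval y) + u ^ 2 * K := by
  obtain ⟨KP, hP⟩ := Polynomial.binomExpansion P y u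
  obtain ⟨KQ, hQ⟩ := Polynomial.binomExpansion Q y u
  exact ⟨KP - y' * KQ, by linear_combination h₀ - h₁ + hP - y' * hQ⟩

end General

section NegOrder

variable {R : Type*} [CommRing R]

open Classical in
def negOrder (f : R⟦X⟧) : WithBot ℤ :=
  if f = 0 then ⊥ else ((-f.order.toNat : ℤ) : WithBot ℤ)

lemma negOrder_of_ne_zero {f : R⟦X⟧} (hf : f ≠ 0) :
    negOrder f = ((-f.order.toNat : ℤ) : WithBot ℤ) := if_neg hf

lemma negOrder_eq_bot_iff {f : R⟦X⟧} : negOrder f = ⊥ ↔ f = 0 := by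
  by_cases hf : f = 0 <;> simp [negOrder, hf]

lemma negOrder_mul [IsDomain R] (f g : R⟦X⟧) : negOrder (f * g) = negOrder f + negOrder g := by
  by_cases hf : f = 0
  · simp [negOrder, hf]
  by_cases hg : g = 0
  · simp [negOrder, hg]
  rw [negOrder_of_ne_zero hf, negOrder_of_ne_zero hg, negOrder_of_ne_zero (mul_ne_zero hf hg),
    PowerSeries.order_mul, ENat.toNat_add (PowerSeries.order_eq_top.not.2 hf)
      (PowerSeries.order_eq_top.not.2 hg)]
  norm_cast
  push_cast
  ring

lemma negOrder_add_le (f g : R⟦X⟧) : negOrder (f + g) ≤ max (negOrder f) (negOrder g) := by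
  by_cases hfg : f + g = 0
  · simp [negOrder, hfg]
  by_cases hf : f = 0
  · simp [hf]
  by_cases hg : g = 0
  · simp [hg]
  have hmin := PowerSeries.min_order_le_order_add f g
  rw [← ENat.natCast_toNat (PowerSeries.order_eq_top.not.2 hf),
    ← ENat.natCast_toNat (PowerSeries.order_eq_top.not.2 hg),
    ← ENat.natCast_toNat (PowerSeries.order_eq_top.not.2 hfg), min_le_iff, Nat.cast_le,
    Nat.cast_le] at hmin
  rw [negOrder_of_ne_zero hf, negOrder_of_ne_zero hg, negOrder_of_ne_zero hfg,
    ← WithBot.coe_max, WithBot.coe_le_coe]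
  omega

lemma isDegreeFunction_negOrder [IsDomain R] : IsDegreeFunction (negOrder (R := R)) :=
  ⟨fun _ ↦ negOrder_eq_bot_iff, negOrder_mul, negOrder_add_le⟩

lemma degDelta_negOrder_comp {B : Type*} [CommRing B] (ev : B → R⟦X⟧) (D : B → B) {x : B}
    (hx : ev x ≠ 0) (hDx : ev (D x) ≠ 0) :
    degDelta (negOrder ∘ ev) D x =
      (((ev x).order.toNat - (ev (D x)).order.toNat : ℤ) : WithBot ℤ) := by
  simp only [degDelta, Function.comp_apply, negOrder_of_ne_zero hx, negOrder_of_ne_zero hDx,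
    WithBot.unbotD_coe, WithBot.map_coe]
  congr 1
  ring

end NegOrder

def gap (n : ℕ) : ℕ := (n + 1)!

lemma gap_strictMono : StrictMono gap := fun _ _ h ↦ (Nat.factorial_lt (by omega)).2 (by omega)

lemma one_le_gap (n : ℕ) : 1 ≤ gap n := Nat.factorial_pos _

lemma lt_gap (n : ℕ) : n < gap n := n.lt_succ_self.trans_le (Nat.self_le_factorial _)

lemma eventually_mul_add_lt_gap_succ (a b : ℕ) :
    ∀ᶠ n in atTop, a * gap n + b < gap (n + 1) := by
  filter_upwards [eventually_ge_atTop (a + b)] with n hn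
  have hsucc : gap (n + 1) = (n + 2) * gap n := Nat.factorial_succ _
  nlinarith [one_le_gap n]

section Lacunary

variable (R : Type*) [CommRing R]

def lacunary : R⟦X⟧ := PowerSeries.mk (Set.indicator (Set.range gap) 1)

def partialSum (n : ℕ) : R[X] := PowerSeries.trunc (gap n) (lacunary R)

lemma X_pow_gap_dvd_lacunary_sub (n : ℕ) :
    PowerSeries.X ^ gap n ∣ lacunary R - (partialSum R n : R⟦X⟧) := by
  refine PowerSeries.X_pow_dvd_iff.2 fun j hj ↦ ?_
  simp [partialSum, Polynomial.coeff_coe, PowerSeries.coeff_trunc, hj]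

lemma order_lacunary_sub [Nontrivial R] (n : ℕ) :
    (lacunary R - (partialSum R n : R⟦X⟧)).order = gap n := by
  refine PowerSeries.order_eq_nat.2 ⟨?_, fun j hj ↦ ?_⟩
  · simp [partialSum, lacunary, Polynomial.coeff_coe, PowerSeries.coeff_trunc]
  · exact PowerSeries.X_pow_dvd_iff.1 (X_pow_gap_dvd_lacunary_sub R n) j hj

lemma partialSum_injective [Nontrivial R] : Function.Injective (partialSum R) := by
  intro a b h
  have := order_lacunary_sub R a
  rw [h, order_lacunary_sub] at this
  exact gap_strictMono.injective (by exact_mod_cast this.symm)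

lemma partialSum_succ (n : ℕ) :
    partialSum R (n + 1) = partialSum R n + Polynomial.X ^ gap n := by
  ext j
  simp only [partialSum, lacunary, Polynomial.coeff_add, Polynomial.coeff_X_pow,
    PowerSeries.coeff_trunc, PowerSeries.coeff_mk]
  by_cases hj : j ∈ Set.range gap
  · obtain ⟨i, rfl⟩ := hj
    simp only [Set.indicator_of_mem (Set.mem_range_self i), gap_strictMono.lt_iff_lt,
      gap_strictMono.injective.eq_iff, Pi.one_apply]
    by_cases hi : i = n <;> grind
  · have : j ≠ gap n := fun h ↦ hj ⟨n, h.symm⟩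
    simp [hj, this]

lemma natDegree_partialSum_succ_le (n : ℕ) : (partialSum R (n + 1)).natDegree ≤ gap n := by
  rw [partialSum_succ]
  refine (Polynomial.natDegree_add_le _ _).trans (max_le ?_ (Polynomial.natDegree_X_pow_le _))
  exact Polynomial.natDegree_le_of_degree_le (PowerSeries.degree_trunc_lt _ _).le

end Lacunary

section Evaluation

variable (R : Type*) [CommRing R]

def lacunaryEval : MvPolynomial (Fin 2) R →ₐ[R] R⟦X⟧ := aeval ![PowerSeries.X, lacunary R]

def approxEval (n : ℕ) : MvPolynomial (Fin 2) R →ₐ[R] R[X] :=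
  aeval ![Polynomial.X, partialSum R n]

/-- `X 0` goes to the coefficient variable and `X 1` to the outer variable. -/
def bivariate : MvPolynomial (Fin 2) R →ₐ[R] R[X][X] :=
  aeval ![Polynomial.C Polynomial.X, Polynomial.X]

lemma coe_approxEval (n : ℕ) (p : MvPolynomial (Fin 2) R) :
    (approxEval R n p : R⟦X⟧) = aeval ![PowerSeries.X, (partialSum R n : R⟦X⟧)] p := by
  induction p using MvPolynomial.induction_on with
  | C r => simp [approxEval]
  | add p q hp hq => simp [hp, hq]
  | mul_X p i hp =>
    rw [map_mul, Polynomial.coe_mul, hp, map_mul]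
    fin_cases i <;> simp [approxEval]

lemma X_pow_gap_dvd_coe_approxEval_sub (n : ℕ) (p : MvPolynomial (Fin 2) R) :
    PowerSeries.X ^ gap n ∣ (approxEval R n p : R⟦X⟧) - lacunaryEval R p := by
  rw [coe_approxEval, lacunaryEval]
  refine dvd_aeval_sub_aeval (fun i ↦ ?_) p
  fin_cases i
  · simp
  · simpa using (dvd_sub_comm).1 (X_pow_gap_dvd_lacunary_sub R n)

lemma exists_natDegree_approxEval_succ_le (p : MvPolynomial (Fin 2) R) :
    ∃ d, ∀ n, (approxEval R (n + 1) p).natDegree ≤ d * gap n := by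
  obtain ⟨d, hd⟩ := exists_natDegree_aeval_le p
  refine ⟨d, fun n ↦ hd _ _ fun i ↦ ?_⟩
  fin_cases i
  · exact Polynomial.natDegree_X_le.trans (one_le_gap n)
  · exact natDegree_partialSum_succ_le R n

lemma eval_bivariate (y : R[X]) (p : MvPolynomial (Fin 2) R) :
    (bivariate R p).eval y = aeval ![Polynomial.X, y] p := by
  induction p using MvPolynomial.induction_on with
  | C r => simp [bivariate]
  | add p q hp hq => simp [hp, hq]
  | mul_X p i hp =>
    rw [map_mul, Polynomial.eval_mul, hp, map_mul]
    fin_cases i <;> simp [bivariate]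

lemma bivariate_injective : Function.Injective (bivariate R) := by
  let back : R[X][X] →+* MvPolynomial (Fin 2) R :=
    Polynomial.eval₂RingHom (Polynomial.eval₂RingHom C (X 0)) (X 1)
  have hback : back.comp (bivariate R).toRingHom = RingHom.id _ := by
    ext i
    · simp [back, bivariate]
    · fin_cases i <;> simp [back, bivariate]
  exact Function.LeftInverse.injective (g := back) fun p ↦ congrArg (· p) hback

variable {R}

lemma negOrder_lacunaryEval_C [IsDomain R] {r : R} (hr : r ≠ 0) :
    negOrder (lacunaryEval R (C r)) = 0 := by
  have hC : lacunaryEval R (C r) = PowerSeries.C r := by simp [lacunaryEval]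
  have hord : (PowerSeries.C r).order = 0 :=
    PowerSeries.order_eq_nat.2 ⟨by simpa using hr, by simp⟩
  rw [hC, negOrder_of_ne_zero ((map_ne_zero_iff _ PowerSeries.C_injective).2 hr), hord]
  rfl

lemma eventually_eq_zero_of_X_pow_dvd_coe {q : ℕ → R[X]} {d : ℕ}
    (hdeg : ∀ n, (q n).natDegree ≤ d * gap n)
    (hdvd : ∀ n, PowerSeries.X ^ (gap (n + 1) - 1) ∣ (q n : R⟦X⟧)) :
    ∀ᶠ n in atTop, q n = 0 := by
  filter_upwards [eventually_mul_add_lt_gap_succ d 1] with n hn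
  exact eq_zero_of_X_pow_dvd_coe (hdvd n) (by have := hdeg n; omega)

variable (R) [IsDomain R]

lemma lacunaryEval_injective : Function.Injective (lacunaryEval R) := by
  refine (injective_iff_map_eq_zero _).2 fun p hp ↦ ?_
  obtain ⟨d, hd⟩ := exists_natDegree_approxEval_succ_le R p
  have hroots : ∀ᶠ n in atTop, (bivariate R p).IsRoot (partialSum R (n + 1)) := by
    refine (eventually_eq_zero_of_X_pow_dvd_coe hd fun n ↦ ?_).mono fun n hn ↦ ?_
    · have := X_pow_gap_dvd_coe_approxEval_sub R (n + 1) p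
      rw [hp, sub_zero] at this
      exact (pow_dvd_pow _ (Nat.sub_le _ _)).trans this
    · rwa [Polynomial.IsRoot, eval_bivariate]
  obtain ⟨N, hN⟩ := eventually_atTop.1 hroots
  apply bivariate_injective R
  rw [map_zero]
  refine (bivariate R p).eq_zero_of_infinite_isRoot <|
    Set.infinite_of_injective_forall_mem (f := fun n ↦ partialSum R (n + N + 1))
    (fun a b h ↦ by simpa using partialSum_injective R h) fun n ↦ hN _ (by omega)

end Evaluation

section Trajectory

variable {R : Type*} [CommRing R]

/-- The curve `Y = y(X)` is an integral curve of the vector field `Q ∂_X + P ∂_Y`. -/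
def IsTrajectory (P Q : R[X][X]) (y : R[X]) : Prop := P.eval y = y.derivative * Q.eval y

lemma X_pow_gap_sub_one_dvd_coe_approxEval_sub {f g : MvPolynomial (Fin 2) R}
    (hfg : lacunaryEval R g = PowerSeries.derivative R (lacunary R) * lacunaryEval R f) (n : ℕ) :
    PowerSeries.X ^ (gap n - 1) ∣ ((approxEval R n g -
      (partialSum R n).derivative * approxEval R n f : R[X]) : R⟦X⟧) := by
  set σ : R⟦X⟧ := (partialSum R n : R⟦X⟧)
  have hσ : PowerSeries.X ^ (gap n - 1) ∣ PowerSeries.derivative R (lacunary R - σ) :=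
    X_pow_sub_one_dvd_derivative (X_pow_gap_dvd_lacunary_sub R n)
  have hX : PowerSeries.X ^ (gap n - 1) ∣ (PowerSeries.X ^ gap n : R⟦X⟧) :=
    pow_dvd_pow _ (Nat.sub_le _ _)
  have hg := hX.trans (X_pow_gap_dvd_coe_approxEval_sub R n g)
  have hf := hX.trans (X_pow_gap_dvd_coe_approxEval_sub R n f)
  have key :
      ((approxEval R n g - (partialSum R n).derivative * approxEval R n f : R[X]) : R⟦X⟧) =
      (approxEval R n g - lacunaryEval R g) -
        PowerSeries.derivative R σ * (approxEval R n f - lacunaryEval R f) +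
        PowerSeries.derivative R (lacunary R - σ) * lacunaryEval R f := by
    rw [map_sub, hfg, PowerSeries.derivative_coe]
    push_cast
    ring
  rw [key]
  exact dvd_add (dvd_sub hg (hf.mul_left _)) (hσ.mul_right _)

lemma eventually_isTrajectory {f g : MvPolynomial (Fin 2) R}
    (hfg : lacunaryEval R g = PowerSeries.derivative R (lacunary R) * lacunaryEval R f) :
    ∀ᶠ n in atTop, IsTrajectory (bivariate R g) (bivariate R f) (partialSum R (n + 1)) := by
  obtain ⟨dg, hdg⟩ := exists_natDegree_approxEval_succ_le R g
  obtain ⟨df, hdf⟩ := exists_natDegree_approxEval_succ_le R f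
  have hdeg (n : ℕ) : (approxEval R (n + 1) g -
      (partialSum R (n + 1)).derivative * approxEval R (n + 1) f).natDegree ≤
        (dg + df + 1) * gap n := by
    refine (Polynomial.natDegree_sub_le _ _).trans (max_le ((hdg n).trans ?_) ?_)
    · exact Nat.mul_le_mul_right _ (by omega)
    · refine Polynomial.natDegree_mul_le.trans ?_
      have := (Polynomial.natDegree_derivative_le (partialSum R (n + 1))).trans
        ((Nat.sub_le _ _).trans (natDegree_partialSum_succ_le R n))
      nlinarith [hdf n]
  filter_upwards [eventually_eq_zero_of_X_pow_dvd_coe hdeg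
    fun n ↦ X_pow_gap_sub_one_dvd_coe_approxEval_sub hfg (n + 1)] with n hn
  rw [IsTrajectory, eval_bivariate, eval_bivariate]
  exact sub_eq_zero.1 hn

def taylorSlope (P Q : R[X][X]) (n : ℕ) : R[X] :=
  P.derivative.eval (partialSum R n) -
    (partialSum R n).derivative * Q.derivative.eval (partialSum R n)

variable {P Q : R[X][X]}

lemma X_pow_gap_sub_one_dvd_taylorSlope_succ_sub (n : ℕ) :
    Polynomial.X ^ (gap n - 1) ∣ taylorSlope P Q (n + 1) - taylorSlope P Q n := by
  have hX : (Polynomial.X : R[X]) ^ (gap n - 1) ∣ partialSum R (n + 1) - partialSum R n := by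
    rw [partialSum_succ, add_sub_cancel_left]
    exact pow_dvd_pow _ (Nat.sub_le _ _)
  have hX' : (Polynomial.X : R[X]) ^ (gap n - 1) ∣
      (partialSum R (n + 1)).derivative - (partialSum R n).derivative := by
    rw [partialSum_succ, Polynomial.derivative_add, add_sub_cancel_left,
      Polynomial.derivative_X_pow]
    exact dvd_mul_left _ _
  have hP := hX.trans (Polynomial.sub_dvd_eval_sub _ _ P.derivative)
  have hQ := hX.trans (Polynomial.sub_dvd_eval_sub _ _ Q.derivative)
  have : taylorSlope P Q (n + 1) - taylorSlope P Q n =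
      (P.derivative.eval (partialSum R (n + 1)) - P.derivative.eval (partialSum R n)) -
        (partialSum R (n + 1)).derivative * (Q.derivative.eval (partialSum R (n + 1)) -
          Q.derivative.eval (partialSum R n)) -
        ((partialSum R (n + 1)).derivative - (partialSum R n).derivative) *
          Q.derivative.eval (partialSum R n) := by
    rw [taylorSlope, taylorSlope]; ring
  rw [this]
  exact dvd_sub (dvd_sub hP (hQ.mul_left _)) (hX'.mul_right _)

variable [IsDomain R]

lemma X_pow_gap_dvd_sub_taylorSlope {n : ℕ} (h₀ : IsTrajectory P Q (partialSum R n))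
    (h₁ : IsTrajectory P Q (partialSum R (n + 1))) :
    Polynomial.X ^ gap n ∣
      Polynomial.C (gap n : R) * Q.eval (partialSum R (n + 1)) -
        Polynomial.X * taylorSlope P Q n := by
  rw [IsTrajectory, partialSum_succ, Polynomial.derivative_add, Polynomial.derivative_X_pow] at h₁
  obtain ⟨K, hK⟩ := exists_taylor_of_eval_eq h₀ h₁
  change _ = _ * taylorSlope P Q n + _ at hK
  rw [partialSum_succ]
  set c := gap n
  set T := taylorSlope P Q n
  have hc : (Polynomial.X : R[X]) ^ c = Polynomial.X ^ (c - 1) * Polynomial.X := by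
    rw [← pow_succ, Nat.sub_add_cancel (one_le_gap n)]
  have hcancel : (Polynomial.X : R[X]) ^ (c - 1) * (Polynomial.C (c : R) *
      Q.eval (partialSum R n + Polynomial.X ^ c) - Polynomial.X * T -
        Polynomial.X ^ c * (Polynomial.X * K)) = 0 := by
    linear_combination hK + (T + Polynomial.X ^ c * K) * hc
  rw [mul_eq_zero, or_iff_right (pow_ne_zero _ Polynomial.X_ne_zero), sub_eq_zero] at hcancel
  exact ⟨_, hcancel⟩

lemma X_pow_gap_dvd_eval_partialSum_succ [CharZero R] {n : ℕ}
    (h₀ : IsTrajectory P Q (partialSum R n)) (h₁ : IsTrajectory P Q (partialSum R (n + 1)))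
    (h₂ : IsTrajectory P Q (partialSum R (n + 2))) :
    Polynomial.X ^ gap n ∣ Q.eval (partialSum R (n + 1)) := by
  have hle : gap n ≤ gap (n + 1) := gap_strictMono.monotone n.le_succ
  have h01 := X_pow_gap_dvd_sub_taylorSlope h₀ h₁
  have h12 := (pow_dvd_pow _ hle).trans (X_pow_gap_dvd_sub_taylorSlope h₁ h₂)
  have hQ : Polynomial.X ^ gap n ∣
      Q.eval (partialSum R (n + 2)) - Q.eval (partialSum R (n + 1)) := by
    refine (pow_dvd_pow _ hle).trans ?_
    simpa [partialSum_succ R (n + 1)] using Polynomial.sub_dvd_eval_sub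
      (partialSum R (n + 2)) (partialSum R (n + 1)) Q
  have hT : Polynomial.X ^ gap n ∣
      Polynomial.X * (taylorSlope P Q (n + 1) - taylorSlope P Q n) := by
    rw [← Nat.sub_add_cancel (one_le_gap n), pow_succ']
    exact mul_dvd_mul_left _ (X_pow_gap_sub_one_dvd_taylorSlope_succ_sub n)
  have hdiff : Polynomial.X ^ gap n ∣
      Polynomial.C ((gap (n + 1) : R) - gap n) * Q.eval (partialSum R (n + 1)) := by
    convert dvd_add (dvd_sub (dvd_sub h12 h01) (hQ.mul_left (Polynomial.C (gap (n + 1) : R)))) hT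
      using 1
    simp only [map_sub]
    ring
  have hne : (gap (n + 1) : R) - gap n ≠ 0 :=
    sub_ne_zero.2 (Nat.cast_injective.ne (gap_strictMono n.lt_succ_self).ne')
  refine Polynomial.X_pow_dvd_iff.2 fun j hj ↦ ?_
  have := Polynomial.X_pow_dvd_iff.1 hdiff j hj
  rwa [Polynomial.coeff_C_mul, mul_eq_zero, or_iff_right hne] at this

lemma lacunaryEval_eq_zero_of_eq_derivative_mul [CharZero R] {f g : MvPolynomial (Fin 2) R}
    (hfg : lacunaryEval R g = PowerSeries.derivative R (lacunary R) * lacunaryEval R f) :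
    lacunaryEval R f = 0 := by
  obtain ⟨N, hN⟩ := eventually_atTop.1 (eventually_isTrajectory hfg)
  have hdvd : ∀ n ≥ N, PowerSeries.X ^ gap (n + 1) ∣ lacunaryEval R f := by
    intro n hn
    have hQ := X_pow_gap_dvd_eval_partialSum_succ (hN n hn) (hN (n + 1) (by omega))
      (hN (n + 2) (by omega))
    rw [eval_bivariate] at hQ
    have hcoe : PowerSeries.X ^ gap (n + 1) ∣ (approxEval R (n + 2) f : R⟦X⟧) := by
      have := map_dvd Polynomial.coeToPowerSeries.ringHom hQ
      simp only [map_pow, Polynomial.coeToPowerSeries.ringHom_apply, Polynomial.coe_X] at this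
      exact this
    have happrox := (pow_dvd_pow _ (gap_strictMono.monotone (show n + 1 ≤ n + 2 by omega))).trans
      (X_pow_gap_dvd_coe_approxEval_sub R (n + 2) f)
    simpa using dvd_sub hcoe happrox
  ext j
  simpa using PowerSeries.X_pow_dvd_iff.1 (hdvd (N + j) le_self_add) j
    (by have := lt_gap (N + j + 1); omega)

lemma derivation_eq_zero_of_lacunaryEval_eq [CharZero R]
    (D : Derivation R (MvPolynomial (Fin 2) R) (MvPolynomial (Fin 2) R))
    (h : lacunaryEval R (D (X 1)) =
      PowerSeries.derivative R (lacunary R) * lacunaryEval R (D (X 0))) : D = 0 := by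
  have h₀ : D (X 0) = 0 := lacunaryEval_injective R
    ((lacunaryEval_eq_zero_of_eq_derivative_mul h).trans (map_zero _).symm)
  have h₁ : D (X 1) = 0 := lacunaryEval_injective R (by rw [h, h₀, map_zero, mul_zero])
  exact MvPolynomial.derivation_ext fun i ↦ by fin_cases i <;> simp [h₀, h₁]

end Trajectory

section TestPoly

variable {R : Type*} [CommRing R]

variable (R) in
def testPoly (n : ℕ) : MvPolynomial (Fin 2) R := X 1 - Polynomial.aeval (X 0) (partialSum R n)

lemma lacunaryEval_aeval_X_zero (q : R[X]) : lacunaryEval R (Polynomial.aeval (X 0) q) = q := by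
  rw [← Polynomial.aeval_algHom_apply]
  simp [lacunaryEval, Polynomial.aeval_def, Polynomial.eval₂_C_X_eq_coe]

lemma lacunaryEval_testPoly (n : ℕ) :
    lacunaryEval R (testPoly R n) = lacunary R - (partialSum R n : R⟦X⟧) := by
  rw [testPoly, map_sub, lacunaryEval_aeval_X_zero]
  simp [lacunaryEval]

lemma lacunaryEval_derivation_testPoly
    (D : Derivation R (MvPolynomial (Fin 2) R) (MvPolynomial (Fin 2) R)) (n : ℕ) :
    lacunaryEval R (D (testPoly R n)) =
      (lacunaryEval R (D (X 1)) -
        PowerSeries.derivative R (lacunary R) * lacunaryEval R (D (X 0))) +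
      PowerSeries.derivative R (lacunary R - partialSum R n) * lacunaryEval R (D (X 0)) := by
  rw [testPoly, map_sub, Derivation.map_aeval, map_sub, smul_eq_mul, map_mul,
    lacunaryEval_aeval_X_zero, map_sub, PowerSeries.derivative_coe]
  ring

lemma not_degreeDefinedAt_of_ne [IsDomain R]
    (D : Derivation R (MvPolynomial (Fin 2) R) (MvPolynomial (Fin 2) R))
    (h : lacunaryEval R (D (X 1)) ≠
      PowerSeries.derivative R (lacunary R) * lacunaryEval R (D (X 0))) :
    ¬ DegreeDefinedAt (negOrder ∘ lacunaryEval R) D := by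
  set e := lacunaryEval R (D (X 1)) -
    PowerSeries.derivative R (lacunary R) * lacunaryEval R (D (X 0))
  set r := e.order.toNat
  have her : e.order = r :=
    (ENat.natCast_toNat (PowerSeries.order_eq_top.not.2 (sub_ne_zero.2 h))).symm
  refine not_degreeDefinedAt_of_forall_exists_lt fun m ↦ ?_
  set n := m.toNat + r + 2
  have hn := lt_gap n
  have htail : (r : ℕ∞) < (PowerSeries.derivative R (lacunary R - partialSum R n) *
      lacunaryEval R (D (X 0))).order := by
    have hdvd := (X_pow_sub_one_dvd_derivative (X_pow_gap_dvd_lacunary_sub R n)).mul_right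
      (lacunaryEval R (D (X 0)))
    refine lt_of_lt_of_le ?_ (PowerSeries.nat_le_order _ _ (PowerSeries.X_pow_dvd_iff.1 hdvd))
    exact_mod_cast (show r < gap n - 1 by omega)
  have hord : (lacunaryEval R (D (testPoly R n))).order = r := by
    rw [lacunaryEval_derivation_testPoly, PowerSeries.order_add_of_order_ne _ _ (her ▸ htail.ne),
      her, min_eq_left htail.le]
  have hDx : lacunaryEval R (D (testPoly R n)) ≠ 0 :=
    PowerSeries.order_eq_top.not.1 (hord ▸ ENat.natCast_ne_top _)
  have hx : lacunaryEval R (testPoly R n) ≠ 0 := by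
    rw [Ne, ← PowerSeries.order_eq_top, lacunaryEval_testPoly, order_lacunary_sub]
    exact ENat.natCast_ne_top _
  refine ⟨testPoly R n, fun h0 ↦ hx (by rw [h0, map_zero]), ?_⟩
  rw [degDelta_negOrder_comp _ _ hx hDx, hord, lacunaryEval_testPoly, order_lacunary_sub,
    ENat.toNat_natCast, ENat.toNat_natCast, WithBot.coe_lt_coe]
  omega

end TestPoly

end LacunaryDegree

end

theorem stmt0 (k : Type*) [Field k] [CharZero k] :
    ∃ deg : MvPolynomial (Fin 2) k → WithBot ℤ,
      IsDegreeFunction deg ∧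
      (∀ lam : k, lam ≠ 0 → deg (MvPolynomial.C lam) = 0) ∧
      ∀ D : Derivation k (MvPolynomial (Fin 2) k) (MvPolynomial (Fin 2) k),
        DegreeDefinedAt deg ⇑D → D = 0 := by
  open LacunaryDegree in
  exact ⟨negOrder ∘ lacunaryEval k,
    isDegreeFunction_negOrder.comp_injective _ (lacunaryEval_injective k),
    fun _ ↦ negOrder_lacunaryEval_C,
    fun D hD ↦ derivation_eq_zero_of_lacunaryEval_eq D
      (of_not_not fun h ↦ not_degreeDefinedAt_of_ne D h hD)⟩
end

section
/- Let B be an integral domain containing a field k of characteristic zero, S ⊆ B \ {0} a multiplicative set, G a totally ordered abelian group, DEG : S⁻¹B → G ∪ {−∞} a degree function on the localization S⁻¹B, and deg : B → G ∪ {−∞} the restriction of DEG to B. If DEG is tame over k, then deg is tame over k. -/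
/-!
Since a localization `B → S⁻¹B` is formally étale, every `k`-derivation `D` of `B` extends to
`S⁻¹B`, and `δ x = DEG (D x) - DEG x` is the same whether computed in `B` or in `S⁻¹B`.
Leibniz's rule and the ultrametric inequality give `δ (x * y) ≤ max (δ x) (δ y)`, and
differentiating `s * s⁻¹ = 1` gives `δ s⁻¹ = δ s`. Hence if `δ` attains its maximum at
`b / s`, it also attains it at `b` or at `s`, both of which lie in `B`.
-/

section Extension

open KaehlerDifferential

variable {R A B : Type*} [CommRing R] [CommRing A] [CommRing B] [Algebra R A] [Algebra A B]
  [Algebra R B] [IsScalarTower R A B] [Algebra.FormallyEtale A B]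

noncomputable def Derivation.extendOfFormallyEtale (D : Derivation R A A) : Derivation R B B :=
  (((Algebra.linearMap A B).compDer D).liftKaehlerDifferential.liftBaseChange B ∘ₗ
    (tensorKaehlerEquivOfFormallyEtale R A B).symm.toLinearMap).compDer (KaehlerDifferential.D R B)

theorem Derivation.extendOfFormallyEtale_algebraMap (D : Derivation R A A) (a : A) :
    D.extendOfFormallyEtale (algebraMap A B a) = algebraMap A B (D a) := by
  simp [Derivation.extendOfFormallyEtale, tensorKaehlerEquivOfFormallyEtale_symm_D_algebraMap]

end Extension

namespace IsDegreeFunction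

variable {R G : Type*} [CommRing R] [AddCommGroup G] [LinearOrder G] {deg : R → WithBot G}

theorem ne_bot (hdeg : IsDegreeFunction deg) {x : R} (hx : x ≠ 0) : deg x ≠ ⊥ :=
  fun h => hx ((hdeg.1 x).mp h)

theorem map_zero (hdeg : IsDegreeFunction deg) : deg 0 = ⊥ :=
  (hdeg.1 0).mpr rfl

theorem map_mul (hdeg : IsDegreeFunction deg) (x y : R) : deg (x * y) = deg x + deg y :=
  hdeg.2.1 x y

theorem map_add_le (hdeg : IsDegreeFunction deg) (x y : R) : deg (x + y) ≤ max (deg x) (deg y) :=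
  hdeg.2.2 x y

theorem mul_ne_zero (hdeg : IsDegreeFunction deg) {x y : R} (hx : x ≠ 0) (hy : y ≠ 0) :
    x * y ≠ 0 := by
  rw [ne_eq, ← hdeg.1, hdeg.map_mul]
  exact WithBot.add_ne_bot.mpr ⟨hdeg.ne_bot hx, hdeg.ne_bot hy⟩

theorem map_one (hdeg : IsDegreeFunction deg) [Nontrivial R] : deg 1 = 0 := by
  obtain ⟨g, hg⟩ := WithBot.ne_bot_iff_exists.mp (hdeg.ne_bot one_ne_zero)
  have h := hdeg.map_mul 1 1
  rw [mul_one, ← hg, ← WithBot.coe_add, WithBot.coe_inj] at h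
  rw [← hg, left_eq_add.mp h, WithBot.coe_zero]

theorem map_neg [IsOrderedAddMonoid G] (hdeg : IsDegreeFunction deg) [Nontrivial R] (x : R) :
    deg (-x) = deg x := by
  obtain ⟨g, hg⟩ := WithBot.ne_bot_iff_exists.mp (hdeg.ne_bot (neg_ne_zero.mpr one_ne_zero))
  have h := hdeg.map_mul (-1) (-1)
  rw [neg_mul_neg, one_mul, hdeg.map_one, ← hg, ← WithBot.coe_add, ← WithBot.coe_zero,
    WithBot.coe_inj, ← two_nsmul, eq_comm, two_nsmul_eq_zero] at h
  rw [neg_eq_neg_one_mul, hdeg.map_mul, ← hg, h, WithBot.coe_zero, zero_add]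

theorem degDelta_add_deg (hdeg : IsDegreeFunction deg) (D : R → R) {x : R} (hx : x ≠ 0) :
    degDelta deg D x + deg x = deg (D x) := by
  obtain ⟨g, hg⟩ := WithBot.ne_bot_iff_exists.mp (hdeg.ne_bot hx)
  rw [degDelta, ← hg, WithBot.unbotD_coe]
  cases deg (D x) with
  | bot => rfl
  | coe a => rw [WithBot.map_coe, ← WithBot.coe_add, sub_add_cancel]

theorem degDelta_le_iff [IsOrderedAddMonoid G] (hdeg : IsDegreeFunction deg) (D : R → R) {x : R}
    (hx : x ≠ 0) {m : WithBot G} : degDelta deg D x ≤ m ↔ deg (D x) ≤ m + deg x := by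
  rw [← hdeg.degDelta_add_deg D hx, WithBot.add_le_add_iff_right (hdeg.ne_bot hx)]

variable {A : Type*} [CommRing A] [Algebra A R]

theorem degDelta_zero (hdeg : IsDegreeFunction deg) (D : Derivation A R R) :
    degDelta deg D 0 = ⊥ := by
  rw [degDelta, D.map_zero, hdeg.map_zero, WithBot.map_bot]

theorem degDelta_mul_le [IsOrderedAddMonoid G] (hdeg : IsDegreeFunction deg)
    (D : Derivation A R R) {x y : R} (hx : x ≠ 0) (hy : y ≠ 0) :
    degDelta deg D (x * y) ≤ max (degDelta deg D x) (degDelta deg D y) := by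
  have hxy : x * y ≠ 0 := hdeg.mul_ne_zero hx hy
  set m := max (degDelta deg D x) (degDelta deg D y)
  have hDx : deg (D x) ≤ m + deg x := (hdeg.degDelta_le_iff D hx).mp (le_max_left _ _)
  have hDy : deg (D y) ≤ m + deg y := (hdeg.degDelta_le_iff D hy).mp (le_max_right _ _)
  rw [hdeg.degDelta_le_iff D hxy, D.leibniz, smul_eq_mul, smul_eq_mul, hdeg.map_mul]
  refine (hdeg.map_add_le _ _).trans (max_le ?_ ?_) <;> rw [hdeg.map_mul]
  · calc deg x + deg (D y) ≤ deg x + (m + deg y) := by gcongr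
      _ = m + (deg x + deg y) := by abel
  · calc deg y + deg (D x) ≤ deg y + (m + deg x) := by gcongr
      _ = m + (deg x + deg y) := by abel

theorem degDelta_eq_of_mul_eq_one [IsOrderedAddMonoid G] (hdeg : IsDegreeFunction deg)
    [Nontrivial R] (D : Derivation A R R) {u v : R} (huv : u * v = 1) :
    degDelta deg D v = degDelta deg D u := by
  have hu : u ≠ 0 := left_ne_zero_of_mul_eq_one huv
  have hv : v ≠ 0 := right_ne_zero_of_mul_eq_one huv
  have hDuv : u * D v = -(v * D u) := by
    have h := D.leibniz u v
    rw [huv, D.map_one_eq_zero, smul_eq_mul, smul_eq_mul, eq_comm, add_eq_zero_iff_eq_neg] at h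
    exact h
  have h := congrArg deg hDuv
  rw [hdeg.map_neg, hdeg.map_mul, hdeg.map_mul, ← hdeg.degDelta_add_deg D hu,
    ← hdeg.degDelta_add_deg D hv] at h
  have h' : degDelta deg D v + deg (u * v) = degDelta deg D u + deg (u * v) := by
    rw [hdeg.map_mul]
    calc _ = deg u + (degDelta deg D v + deg v) := by abel
      _ = deg v + (degDelta deg D u + deg u) := h
      _ = _ := by abel
  rwa [huv, hdeg.map_one, add_zero, add_zero] at h'

theorem degDelta_le_of_isGreatest (hdeg : IsDegreeFunction deg) (D : Derivation A R R)
    {M : WithBot G} (hM : IsGreatest (degDeltaSet deg D) M) (x : R) : degDelta deg D x ≤ M := by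
  by_cases hx : x = 0
  · rw [hx, hdeg.degDelta_zero D]
    exact bot_le
  · exact hM.2 ⟨x, hx, rfl⟩

theorem exists_degDelta_algebraMap_eq_of_isGreatest [IsOrderedAddMonoid G] {R' : Type*}
    [CommRing R'] [Algebra R R'] (S : Submonoid R) [IsLocalization S R'] {DEG : R' → WithBot G}
    (hDEG : IsDegreeFunction DEG) {A' : Type*} [CommRing A'] [Algebra A' R']
    (D : Derivation A' R' R') {M : WithBot G} (hM : IsGreatest (degDeltaSet DEG D) M) :
    ∃ b : R, algebraMap R R' b ≠ 0 ∧ degDelta DEG D (algebraMap R R' b) = M := by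
  obtain ⟨⟨x, hx, hxM⟩, hMub⟩ := hM
  have : Nontrivial R' := nontrivial_of_ne x 0 hx
  obtain ⟨b, s, rfl⟩ := IsLocalization.exists_mk'_eq S x
  have hsv : algebraMap R R' s * IsLocalization.mk' R' 1 s = 1 := by
    rw [IsLocalization.mk'_spec', RingHom.map_one]
  have hbs := IsLocalization.mk'_eq_mul_mk'_one (M := S) (S := R') b s
  have hb : algebraMap R R' b ≠ 0 := fun h => hx (by rw [hbs, h, zero_mul])
  have hs : algebraMap R R' s ≠ 0 := left_ne_zero_of_mul_eq_one hsv
  have hle :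
      M ≤ max (degDelta DEG D (algebraMap R R' b)) (degDelta DEG D (algebraMap R R' s)) := by
    rw [← hxM, hbs, ← hDEG.degDelta_eq_of_mul_eq_one D hsv]
    exact hDEG.degDelta_mul_le D hb (right_ne_zero_of_mul_eq_one hsv)
  rcases le_max_iff.mp hle with h | h
  · exact ⟨b, hb, le_antisymm (hMub ⟨_, hb, rfl⟩) h⟩
  · exact ⟨s, hs, le_antisymm (hMub ⟨_, hs, rfl⟩) h⟩

end IsDegreeFunction

theorem stmt5_general (k B B' : Type*) [Field k] [CommRing B]
    [Algebra k B] [CommRing B'] [Algebra B B'] [Algebra k B'] [IsScalarTower k B B']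
    (S : Submonoid B) [IsLocalization S B']
    {G : Type*} [AddCommGroup G] [LinearOrder G] [IsOrderedAddMonoid G]
    (DEG : B' → WithBot G) (hDEG : IsDegreeFunction DEG)
    (deg : B → WithBot G) (hres : ∀ b : B, deg b = DEG (algebraMap B B' b))
    (htame : ∀ D : Derivation k B' B', DegreeDefinedAt DEG ⇑D) :
    ∀ D : Derivation k B B, DegreeDefinedAt deg ⇑D := by
  have := Algebra.FormallyEtale.of_isLocalization (Rₘ := B') S
  intro D
  set D' : Derivation k B' B' := D.extendOfFormallyEtale
  have hδ (b : B) : degDelta deg D b = degDelta DEG D' (algebraMap B B' b) := by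
    simp only [degDelta, hres, D', Derivation.extendOfFormallyEtale_algebraMap]
  obtain ⟨M, hM⟩ := htame D'
  obtain ⟨b, hb, hbM⟩ := hDEG.exists_degDelta_algebraMap_eq_of_isGreatest S D' hM
  refine ⟨M, ⟨b, fun h => hb (by rw [h, map_zero]), (hδ b).trans hbM⟩, ?_⟩
  rintro _ ⟨x, -, rfl⟩
  exact (hδ x).trans_le (hDEG.degDelta_le_of_isGreatest D' hM _)

theorem stmt5 (k B B' : Type*) [Field k] [CharZero k] [CommRing B] [IsDomain B]
    [Algebra k B] [CommRing B'] [Algebra B B'] [Algebra k B'] [IsScalarTower k B B']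
    (S : Submonoid B) (hS : (0 : B) ∉ S) [IsLocalization S B']
    {G : Type*} [AddCommGroup G] [LinearOrder G] [IsOrderedAddMonoid G]
    (DEG : B' → WithBot G) (hDEG : IsDegreeFunction DEG)
    (deg : B → WithBot G) (hres : ∀ b : B, deg b = DEG (algebraMap B B' b))
    (htame : ∀ D : Derivation k B' B', DegreeDefinedAt DEG ⇑D) :
    ∀ D : Derivation k B B, DegreeDefinedAt deg ⇑D :=
  stmt5_general k B B' S DEG hDEG deg hres htame
end

section
/- Let L/K be an extension of fields of characteristic different from 2, and let 𝒰 be a subset of L satisfying: (i) u² ∈ K for all u ∈ 𝒰; and (ii) for every nonempty finite subset F of 𝒰, the product ∏_{u∈F} u does not belong to K. Then the family (∏_{u∈F} u), indexed by the finite subsets F of 𝒰 (with the empty product equal to 1), is linearly independent over K. -/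
namespace Stmt7Aux

variable {K L : Type*} [Field K] [Field L] [Algebra K L]

open Finset

variable (K) in
/-- span of the products over subsets of `V` -/
noncomputable def MV [DecidableEq L] (V : Finset L) : Submodule K L :=
  Submodule.span K ((V.powerset.image fun F => ∏ u ∈ F, u : Finset L) : Set L)

section

variable [DecidableEq L]

lemma prod_mem_MV {V F : Finset L} (hF : F ⊆ V) : (∏ u ∈ F, u) ∈ MV K V := by
  apply Submodule.subset_span
  simp only [coe_image, Set.mem_image, mem_coe, mem_powerset]
  exact ⟨F, hF, rfl⟩

lemma one_mem_MV (V : Finset L) : (1 : L) ∈ MV K V := by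
  have := prod_mem_MV (K := K) (V.empty_subset)
  simpa using this

instance MV_finite (V : Finset L) : Module.Finite K (MV K V) :=
  Module.Finite.span_of_finite K (Finset.finite_toSet _)

lemma symmDiff_prod (F G : Finset L) :
    (∏ u ∈ F, u) * (∏ u ∈ G, u) = (∏ u ∈ symmDiff F G, u) * (∏ u ∈ F ∩ G, u) ^ 2 := by
  have h2 : F ∪ G = symmDiff F G ∪ (F ∩ G) := by
    have := symmDiff_sup_inf F G
    simpa [Finset.sup_eq_union, Finset.inf_eq_inter] using this.symm
  have h3 : Disjoint (symmDiff F G) (F ∩ G) := by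
    have := disjoint_symmDiff_inf F G
    simpa [Finset.inf_eq_inter] using this
  rw [← Finset.prod_union_inter, h2, Finset.prod_union h3]
  ring

lemma mem_MV_iff {V : Finset L} {x : L} :
    x ∈ MV K V ↔ ∃ c : Finset L → K, x = ∑ F ∈ V.powerset, c F • ∏ u ∈ F, u := by
  constructor
  · intro hx
    induction hx using Submodule.span_induction with
    | mem y hy =>
      simp only [coe_image, Set.mem_image, mem_coe, mem_powerset] at hy
      obtain ⟨F, hF, rfl⟩ := hy
      refine ⟨fun G => if G = F then 1 else 0, ?_⟩
      simp only [ite_smul, zero_smul, one_smul]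
      rw [Finset.sum_ite_eq' V.powerset]
      simp [mem_powerset.2 hF]
    | zero => exact ⟨0, by simp⟩
    | add y z _ _ hy hz =>
      obtain ⟨c, rfl⟩ := hy; obtain ⟨d, rfl⟩ := hz
      exact ⟨c + d, by simp [add_smul, Finset.sum_add_distrib]⟩
    | smul a y _ hy =>
      obtain ⟨c, rfl⟩ := hy
      exact ⟨a • c, by simp [Finset.smul_sum, smul_smul]⟩
  · rintro ⟨c, rfl⟩
    exact Submodule.sum_mem _ fun F hF =>
      Submodule.smul_mem _ _ (prod_mem_MV (mem_powerset.1 hF))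

variable (U : Set L) (hsq : ∀ u ∈ U, ∃ c : K, algebraMap K L c = u ^ 2)

include hsq in
lemma sq_prod {F : Finset L} (hF : ↑F ⊆ U) :
    ∃ c : K, algebraMap K L c = (∏ u ∈ F, u) ^ 2 := by
  classical
  induction F using Finset.induction_on with
  | empty => exact ⟨1, by simp⟩
  | @insert a s ha ih =>
    obtain ⟨c, hc⟩ := ih (fun x hx => hF (by simp [hx]))
    obtain ⟨d, hd⟩ := hsq a (hF (by simp))
    exact ⟨d * c, by rw [Finset.prod_insert ha, mul_pow, map_mul, hc, hd]⟩

include hsq in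
lemma mul_mem_MV {V : Finset L} (hV : ↑V ⊆ U) {x y : L}
    (hx : x ∈ MV K V) (hy : y ∈ MV K V) : x * y ∈ MV K V := by
  rw [mem_MV_iff] at hx hy
  obtain ⟨c, rfl⟩ := hx; obtain ⟨d, rfl⟩ := hy
  rw [Finset.sum_mul_sum]
  apply Submodule.sum_mem
  intro F hF
  apply Submodule.sum_mem
  intro G hG
  rw [mem_powerset] at hF hG
  obtain ⟨k, hk⟩ := sq_prod U hsq (show ↑(F ∩ G) ⊆ U from
    fun x hx => hV (hF (Finset.mem_of_mem_inter_left (by exact_mod_cast hx))))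
  have hFG : (∏ u ∈ F, u) * (∏ u ∈ G, u) = (∏ u ∈ symmDiff F G, u) * algebraMap K L k := by
    rw [symmDiff_prod, hk]
  have key : (c F • ∏ u ∈ F, u) * (d G • ∏ u ∈ G, u)
      = (c F * d G * k) • ∏ u ∈ symmDiff F G, u := by
    simp only [Algebra.smul_def, map_mul]
    rw [mul_mul_mul_comm, hFG]
    ring
  rw [key]
  exact Submodule.smul_mem _ _ (prod_mem_MV (fun x hx => by
    have : x ∈ F ∪ G := by
      have h := symmDiff_le_sup (a := F) (b := G)
      exact h hx
    rcases Finset.mem_union.1 this with h | h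
    exacts [hF h, hG h]))

variable (K) in
include hsq in
/-- the subalgebra structure on MV -/
noncomputable def SA {V : Finset L} (hV : ↑V ⊆ U) : Subalgebra K L where
  carrier := MV K V
  mul_mem' := mul_mem_MV U hsq hV
  add_mem' := fun h1 h2 => (MV K V).add_mem h1 h2
  one_mem' := one_mem_MV V
  algebraMap_mem' := fun k => show algebraMap K L k ∈ MV K V by
    rw [Algebra.algebraMap_eq_smul_one]
    exact (MV K V).smul_mem k (one_mem_MV V)

include hsq in
lemma inv_mem_MV {V : Finset L} (hV : ↑V ⊆ U) {x : L}
    (hx : x ∈ MV K V) : x⁻¹ ∈ MV K V := by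
  rcases eq_or_ne x 0 with rfl | hx0
  · simpa using (MV K V).zero_mem
  let A := SA K U hsq hV
  have hxA : x ∈ A := hx
  haveI : Module.Finite K A := by
    have : Subalgebra.toSubmodule A = MV K V := rfl
    exact Module.Finite.equiv (LinearEquiv.ofEq _ _ this.symm)
  have halg : IsAlgebraic K x := by
    have hint : IsIntegral K (⟨x, hxA⟩ : A) := IsIntegral.of_finite K _
    have : IsIntegral K x := hint.map (A.val)
    exact this.isAlgebraic
  exact A.inv_mem_of_algebraic (x := ⟨x, hxA⟩) halg

lemma split_sum {V : Finset L} {u : L} (hu : u ∉ V) (c : Finset L → K) :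
    ∑ F ∈ (insert u V).powerset, c F • ∏ v ∈ F, v
      = (∑ F ∈ V.powerset, c F • ∏ v ∈ F, v)
        + u * ∑ F ∈ V.powerset, c (insert u F) • ∏ v ∈ F, v := by
  have hdisj : Disjoint V.powerset (V.powerset.image (insert u)) := by
    rw [Finset.disjoint_left]
    intro F hF hF'
    rw [mem_powerset] at hF
    simp only [Finset.mem_image] at hF'
    obtain ⟨G, _, rfl⟩ := hF'
    exact hu (hF (Finset.mem_insert_self u G))
  have hinj : Set.InjOn (insert u) (V.powerset : Set (Finset L)) := by
    intro a ha b hb hab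
    rw [Finset.mem_coe, Finset.mem_powerset] at ha hb
    have : (insert u a).erase u = (insert u b).erase u := by rw [hab]
    rwa [Finset.erase_insert (fun h => hu (ha h)),
      Finset.erase_insert (fun h => hu (hb h))] at this
  rw [Finset.powerset_insert, Finset.sum_union hdisj, Finset.sum_image hinj, Finset.mul_sum]
  congr 1
  refine Finset.sum_congr rfl fun F hF => ?_
  rw [mem_powerset] at hF
  rw [Finset.prod_insert (fun h => hu (hF h)), mul_smul_comm]

lemma MV_decompose {V : Finset L} {u : L} (hu : u ∉ V) {x : L}
    (hx : x ∈ MV K (insert u V)) :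
    ∃ A B, A ∈ MV K V ∧ B ∈ MV K V ∧ x = A + u * B := by
  rw [mem_MV_iff] at hx
  obtain ⟨c, rfl⟩ := hx
  exact ⟨_, _, mem_MV_iff.2 ⟨c, rfl⟩, mem_MV_iff.2 ⟨fun F => c (insert u F), rfl⟩,
    split_sum hu c⟩


include hsq in
lemma main_induction (h2 : (2 : K) ≠ 0)
    (hprod : ∀ F : Finset L, ↑F ⊆ U → F.Nonempty →
      ∀ c : K, algebraMap K L c ≠ ∏ u ∈ F, u)
    (V : Finset L) :  ↑V ⊆ U →
    ((∀ c : Finset L → K, ∑ F ∈ V.powerset, c F • ∏ u ∈ F, u = 0 →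
        ∀ F ∈ V.powerset, c F = 0)
     ∧ (∀ G : Finset L, ↑G ⊆ U → G.Nonempty → Disjoint G V →
        (∏ u ∈ G, u) ∉ MV K V)) := by
  have hinj : Function.Injective (algebraMap K L) := (algebraMap K L).injective
  induction V using Finset.induction_on with
  | empty =>
    intro _
    constructor
    · intro c hc F hF
      rw [Finset.powerset_empty, Finset.sum_singleton] at hc
      rw [Finset.powerset_empty, Finset.mem_singleton] at hF
      subst hF
      have : algebraMap K L (c ∅) = 0 := by
        rw [Algebra.algebraMap_eq_smul_one]
        simpa using hc
      simpa using hinj (this.trans (map_zero (algebraMap K L)).symm)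
    · intro G hGU hGne _ hmem
      rw [mem_MV_iff] at hmem
      obtain ⟨c, hc⟩ := hmem
      rw [Finset.powerset_empty, Finset.sum_singleton] at hc
      refine hprod G hGU hGne (c ∅) ?_
      rw [Algebra.algebraMap_eq_smul_one]
      simpa using hc.symm
  | @insert u V' hu ih =>
    intro hV
    have huU : u ∈ U := hV (by simp)
    have hV' : ↑V' ⊆ U := fun x hx => hV (by simp [hx])
    obtain ⟨iha, ihb⟩ := ih hV'
    have h2L : (2 : L) ≠ 0 := by
      intro h
      apply h2
      apply hinj
      rw [map_ofNat, map_zero, h]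
    have hu_not : u ∉ MV K V' := by
      have := ihb {u} (by simpa using huU) ⟨u, Finset.mem_singleton_self u⟩
        (Finset.disjoint_singleton_left.2 hu)
      simpa using this
    -- part (b) for insert u V'
    have claim_b : ∀ G : Finset L, ↑G ⊆ U → G.Nonempty → Disjoint G (insert u V') →
        (∏ v ∈ G, v) ∉ MV K (insert u V') := by
      intro G hGU hGne hGdisj hmem
      have huG : u ∉ G := fun h => Finset.disjoint_left.1 hGdisj h (by simp)
      have hGV' : Disjoint G V' :=
        Finset.disjoint_of_subset_right (Finset.subset_insert u V') hGdisj
      obtain ⟨A, B, hA, hB, hx⟩ := MV_decompose hu hmem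
      obtain ⟨kG, hkG⟩ := sq_prod U hsq hGU
      obtain ⟨ku, hku⟩ := hsq u huU
      by_cases hAB : A * B = 0
      · rcases mul_eq_zero.1 hAB with hA0 | hB0
        · -- A = 0 : insert u G gives contradiction
          refine ihb (insert u G) ?_ (Finset.insert_nonempty u G) ?_ ?_
          · intro x hx'
            rcases Finset.mem_insert.1 (by exact_mod_cast hx') with rfl | hxx
            · exact huU
            · exact hGU hxx
          · rw [Finset.disjoint_left]
            intro a ha
            rcases Finset.mem_insert.1 ha with rfl | haG
            · exact hu
            · exact fun h => Finset.disjoint_left.1 hGV' haG h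
          · have : ∏ v ∈ insert u G, v = ku • B := by
              rw [Finset.prod_insert huG, hx, hA0, zero_add, ← mul_assoc, ← sq,
                ← hku, Algebra.smul_def]
            rw [this]
            exact Submodule.smul_mem _ _ hB
        · -- B = 0 : G itself gives contradiction
          refine ihb G hGU hGne hGV' ?_
          rw [show (∏ v ∈ G, v) = A by rw [hx, hB0, mul_zero, add_zero]]
          exact hA
      · -- A * B ≠ 0 : u ∈ MV K V', contradiction
        apply hu_not
        have hsq_eq : algebraMap K L kG
            = A ^ 2 + algebraMap K L ku * B ^ 2 + 2 * u * (A * B) := by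
          have h1 : algebraMap K L kG = (A + u * B) ^ 2 := by rw [hkG, hx]
          linear_combination h1 - B ^ 2 * hku
        have h2AB : 2 * (A * B) ≠ 0 := mul_ne_zero h2L hAB
        have hu_eq : u = (algebraMap K L kG - A ^ 2 - algebraMap K L ku * B ^ 2)
            * (2 * (A * B))⁻¹ := by
          rw [← div_eq_mul_inv, eq_div_iff h2AB]
          linear_combination -hsq_eq
        rw [hu_eq]
        have hX : (algebraMap K L kG - A ^ 2 - algebraMap K L ku * B ^ 2) ∈ MV K V' := by
          refine Submodule.sub_mem _ (Submodule.sub_mem _ ?_ ?_) ?_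
          · rw [Algebra.algebraMap_eq_smul_one]
            exact Submodule.smul_mem _ _ (one_mem_MV V')
          · rw [sq]
            exact mul_mem_MV U hsq hV' hA hA
          · rw [Algebra.algebraMap_eq_smul_one, smul_mul_assoc, one_mul, sq]
            exact Submodule.smul_mem _ _ (mul_mem_MV U hsq hV' hB hB)
        refine mul_mem_MV U hsq hV' hX ?_
        refine inv_mem_MV U hsq hV' ?_
        have h2mem : (2 : L) * (A * B) = (2 : K) • (A * B) := by
          rw [Algebra.smul_def, map_ofNat]
        rw [h2mem]
        exact Submodule.smul_mem _ _ (mul_mem_MV U hsq hV' hA hB)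
    refine ⟨?_, claim_b⟩
    -- part (a)
    intro c hc F hF
    rw [split_sum hu c] at hc
    set B := ∑ F ∈ V'.powerset, c (insert u F) • ∏ v ∈ F, v with hBdef
    set A := ∑ F ∈ V'.powerset, c F • ∏ v ∈ F, v with hAdef
    have hB0 : B = 0 := by
      by_contra hB
      apply hu_not
      have : u = -A * B⁻¹ := by
        field_simp
        linear_combination hc
      rw [this]
      refine mul_mem_MV U hsq hV' (Submodule.neg_mem _ (mem_MV_iff.2 ⟨c, rfl⟩)) ?_
      exact inv_mem_MV U hsq hV' (mem_MV_iff.2 ⟨fun F => c (insert u F), rfl⟩)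
    have hA0 : A = 0 := by
      have := hc
      rw [hB0, mul_zero, add_zero] at this
      exact this
    have haz := iha c hA0
    rw [Finset.mem_powerset] at hF
    by_cases huF : u ∈ F
    · have hFe : F.erase u ∈ V'.powerset := by
        rw [Finset.mem_powerset]
        intro x hx'
        rcases Finset.mem_insert.1 (hF (Finset.mem_of_mem_erase hx')) with rfl | h
        · exact absurd rfl (Finset.ne_of_mem_erase hx')
        · exact h
      have := iha (fun F => c (insert u F)) hB0 _ hFe
      simpa [Finset.insert_erase huF] using this
    · refine haz F ?_
      rw [Finset.mem_powerset]
      intro x hx'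
      rcases Finset.mem_insert.1 (hF hx') with rfl | h
      · exact absurd hx' huF
      · exact h

end

end Stmt7Aux

theorem stmt7 (K L : Type*) [Field K] [Field L] [Algebra K L]
    (h2 : (2 : K) ≠ 0)
    (U : Set L)
    (hsq : ∀ u ∈ U, ∃ c : K, algebraMap K L c = u ^ 2)
    (hprod : ∀ F : Finset L, ↑F ⊆ U → F.Nonempty →
      ∀ c : K, algebraMap K L c ≠ ∏ u ∈ F, u) :
    LinearIndependent K fun F : {F : Finset L // ↑F ⊆ U} => ∏ u ∈ F.1, u := by
  classical
  rw [linearIndependent_iff']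
  intro s g hsum i hi
  set V : Finset L := s.sup (fun F => F.1) with hVdef
  have hVU : ↑V ⊆ U := by
    intro x hx
    rw [Finset.mem_coe, hVdef, Finset.mem_sup] at hx
    obtain ⟨j, _, hj⟩ := hx
    exact j.2 hj
  set c : Finset L → K := fun F =>
    if h : ↑F ⊆ U then
      (if (⟨F, h⟩ : {F : Finset L // ↑F ⊆ U}) ∈ s then g ⟨F, h⟩ else 0)
    else 0 with hcdef
  have hcs : ∀ j ∈ s, c j.1 = g j := by
    intro j hj
    simp only [hcdef, dif_pos j.2]
    rw [if_pos]
    exact hj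
  have himgsub : s.image (fun j => j.1) ⊆ V.powerset := by
    intro F hF
    simp only [Finset.mem_image] at hF
    obtain ⟨j, hj, rfl⟩ := hF
    exact Finset.mem_powerset.2 (Finset.le_sup hj)
  have hzero : ∀ F ∈ V.powerset, F ∉ s.image (fun j => j.1) → c F • ∏ u ∈ F, u = 0 := by
    intro F hF hFn
    have hFU : ↑F ⊆ U := fun x hx => hVU (Finset.mem_powerset.1 hF hx)
    have hc0 : c F = 0 := by
      simp only [hcdef, dif_pos hFU]
      rw [if_neg]
      intro hmem
      exact hFn (Finset.mem_image.2 ⟨⟨F, hFU⟩, hmem, rfl⟩)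
    rw [hc0, zero_smul]
  have key : ∑ F ∈ V.powerset, c F • ∏ u ∈ F, u = 0 := by
    rw [← Finset.sum_subset himgsub hzero,
      Finset.sum_image (fun a _ b _ h => Subtype.ext h)]
    exact (Finset.sum_congr rfl fun j hj => by rw [hcs j hj]).trans hsum
  obtain ⟨main_a, -⟩ := Stmt7Aux.main_induction U hsq h2 hprod V hVU
  have hfinal := main_a c key i.1 (Finset.mem_powerset.2 (Finset.le_sup hi))
  rw [← hcs i hi]
  exact hfinal
end

section
/- Let R be an integral domain of finite transcendence degree over a field k of characteristic zero, and let B = R[X₁, …, X_n] be the polynomial ring in n variables over R. Let G be a totally ordered abelian group, choose (d₁, …, d_n) ∈ Gⁿ, and endow B with the G-grading in which the nonzero elements of R are homogeneous of degree 0 and each Xᵢ is homogeneous of degree dᵢ. Let deg : B → G ∪ {−∞} be the degree function determined by this grading. Then deg is tame over k. More precisely, if z₁, …, z_m ∈ R are such that R is algebraic over k[z₁, …, z_m], then for every k-derivation D : B → B, deg(D) is defined and deg(D) = max{δ_D(z₁), …, δ_D(z_m), δ_D(X₁), …, δ_D(X_n)}. -/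
/-!
The hypotheses on `deg` say that it is `MvPolynomial.weightedTotalDegree' d`. Let `M` be the
claimed maximum and call `y` controlled with bound `α` if `deg y ≤ α` and
`deg (D y) ≤ M + α`. By the Leibniz rule controlled elements are closed under sums (same bound)
and products (bounds add). Hence, once every `C c` is controlled with bound `0` and every `Xᵢ`
with bound `dᵢ`, every `x` is controlled with bound `deg x`, which is `δ_D(x) ≤ M`.

The `c` with `C c` controlled form a `k`-subalgebra of `R` containing the `zⱼ`. It contains every
`r` algebraic over it: in characteristic zero `r` is a root of some `p` with `p'(r) ≠ 0`, and
differentiating `p(r) = 0` gives `p'(r) · D r = -∑ (D aᵢ) rⁱ`, of degree at most `M`, while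
multiplication by the nonzero constant `p'(r)` preserves degrees. Finally `M` is attained, being
one of the `δ_D(zⱼ)`, `δ_D(Xᵢ)`, or `-∞ = δ_D(1)`.
-/

namespace MvPolynomial

open Finsupp

variable {R σ M : Type*}

theorem eq_weightedTotalDegree' [CommSemiring R] [Fintype σ] [AddCommMonoid M]
    [LinearOrder M] {w : σ → M} {deg : MvPolynomial σ R → WithBot M} (hdeg0 : deg 0 = ⊥)
    (hdeg : ∀ p : MvPolynomial σ R, p ≠ 0 →
      (∀ s ∈ p.support, ((∑ i, s i • w i : M) : WithBot M) ≤ deg p) ∧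
      (∃ s ∈ p.support, deg p = ((∑ i, s i • w i : M) : WithBot M))) :
    deg = weightedTotalDegree' w := by
  have hweight (s : σ →₀ ℕ) : ∑ i, s i • w i = weight w s := by
    rw [weight_apply, Finsupp.sum_fintype _ _ (by simp)]
  funext p
  obtain rfl | hp := eq_or_ne p 0
  · rw [hdeg0, weightedTotalDegree'_zero]
  obtain ⟨hle, s, hs, hdeg_eq⟩ := hdeg p hp
  simp only [hweight] at hle hdeg_eq
  exact le_antisymm (hdeg_eq ▸ Finset.le_sup (f := fun t => (weight w t : WithBot M)) hs)
    (Finset.sup_le hle)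

section Semiring

variable [CommSemiring R] [AddCommMonoid M] [LinearOrder M] (w : σ → M)

theorem weightedTotalDegree'_le_of_support_subset {p : MvPolynomial σ R}
    {s : Finset (σ →₀ ℕ)} (h : p.support ⊆ s) :
    weightedTotalDegree' w p ≤ s.sup fun t => (weight w t : WithBot M) :=
  Finset.sup_mono h

theorem weightedTotalDegree'_add_le (p q : MvPolynomial σ R) :
    weightedTotalDegree' w (p + q) ≤ weightedTotalDegree' w p ⊔ weightedTotalDegree' w q := by
  classical
  exact (weightedTotalDegree'_le_of_support_subset w support_add).trans_eq Finset.sup_union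

theorem weightedTotalDegree'_sum_le {ι : Type*} (s : Finset ι) (f : ι → MvPolynomial σ R) :
    weightedTotalDegree' w (∑ i ∈ s, f i) ≤ s.sup fun i => weightedTotalDegree' w (f i) := by
  classical
  exact (weightedTotalDegree'_le_of_support_subset w support_sum).trans_eq (Finset.sup_biUnion _ _)

theorem weightedTotalDegree'_monomial_le (s : σ →₀ ℕ) (c : R) :
    weightedTotalDegree' w (monomial s c) ≤ weight w s :=
  (weightedTotalDegree'_le_of_support_subset w support_monomial_subset).trans_eq
    Finset.sup_singleton

theorem weightedTotalDegree'_C_le (r : R) :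
    weightedTotalDegree' w (C r : MvPolynomial σ R) ≤ 0 :=
  (weightedTotalDegree'_monomial_le w 0 r).trans_eq (by simp)

theorem weightedTotalDegree'_X_le (i : σ) :
    weightedTotalDegree' w (X i : MvPolynomial σ R) ≤ w i :=
  (weightedTotalDegree'_monomial_le w _ _).trans_eq (by simp [weight_single])

variable [IsOrderedAddMonoid M]

theorem weightedTotalDegree'_mul_le (p q : MvPolynomial σ R) :
    weightedTotalDegree' w (p * q) ≤ weightedTotalDegree' w p + weightedTotalDegree' w q := by
  classical
  refine Finset.sup_le fun s hs => ?_
  obtain ⟨a, ha, b, hb, rfl⟩ := Finset.mem_add.mp (support_mul p q hs)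
  rw [map_add, WithBot.coe_add]
  exact add_le_add (Finset.le_sup (f := fun t => (weight w t : WithBot M)) ha)
    (Finset.le_sup (f := fun t => (weight w t : WithBot M)) hb)

end Semiring

section Ring

variable [CommRing R] [AddCommMonoid M] [LinearOrder M] (w : σ → M)

theorem weightedTotalDegree'_neg (p : MvPolynomial σ R) :
    weightedTotalDegree' w (-p) = weightedTotalDegree' w p := by
  rw [weightedTotalDegree', support_neg, weightedTotalDegree']

theorem weightedTotalDegree'_C_mul [IsDomain R] {r : R} (hr : r ≠ 0) (p : MvPolynomial σ R) :
    weightedTotalDegree' w (C r * p) = weightedTotalDegree' w p := by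
  rw [C_mul', weightedTotalDegree', support_smul_eq hr, weightedTotalDegree']

end Ring

end MvPolynomial

section DegDelta

variable {B G : Type*} [AddCommGroup G] {deg : B → WithBot G}

theorem degDelta_le_iff [LinearOrder G] [IsOrderedAddMonoid G] {D : B → B} {x : B}
    (hx : deg x ≠ ⊥) {M : WithBot G} : degDelta deg D x ≤ M ↔ deg (D x) ≤ M + deg x := by
  obtain ⟨g, hg⟩ := WithBot.ne_bot_iff_exists.mp hx
  rw [degDelta, ← hg, WithBot.unbotD_coe]
  cases deg (D x) with
  | bot => simp
  | coe h =>
    cases M with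
    | bot => simp
    | coe m => simp [← WithBot.coe_add]

variable {k : Type*} [CommRing k] [CommRing B] [Nontrivial B] [Algebra k B]

theorem bot_mem_degDeltaSet (hdeg0 : deg 0 = ⊥) (D : Derivation k B B) :
    ⊥ ∈ degDeltaSet deg D :=
  ⟨1, one_ne_zero, by simp [degDelta, hdeg0]⟩

theorem degDelta_mem_degDeltaSet (hdeg0 : deg 0 = ⊥) (D : Derivation k B B) (x : B) :
    degDelta deg D x ∈ degDeltaSet deg D := by
  obtain rfl | hx := eq_or_ne x 0
  · simpa [degDelta, hdeg0] using bot_mem_degDeltaSet hdeg0 D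
  · exact ⟨x, hx, rfl⟩

theorem Finset.sup_degDelta_mem_degDeltaSet [LinearOrder G] {ι : Type*} (hdeg0 : deg 0 = ⊥)
    (D : Derivation k B B) (s : Finset ι) (f : ι → B) :
    (s.sup fun i => degDelta deg D (f i)) ∈ degDeltaSet deg D :=
  Finset.sup_mem _ (bot_mem_degDeltaSet hdeg0 D) (fun a ha b hb => sup_ind a b ha hb) _ _
    fun i _ => degDelta_mem_degDeltaSet hdeg0 D (f i)

end DegDelta

open Polynomial in
theorem IsAlgebraic.exists_aeval_eq_zero_aeval_derivative_ne_zero {A S : Type*} [CommRing A]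
    [CommRing S] [IsAddTorsionFree S] [Algebra A S] (hinj : Function.Injective (algebraMap A S))
    {x : S} (hx : IsAlgebraic A x) :
    ∃ p : A[X], aeval x p = 0 ∧ aeval x (derivative p) ≠ 0 := by
  have : IsAddTorsionFree A := hinj.isAddTorsionFree (algebraMap A S).toAddMonoidHom
  obtain ⟨p, hp0, hpx⟩ := hx
  induction h : p.natDegree using Nat.strong_induction_on generalizing p with
  | _ N ih =>
  by_cases hp' : aeval x (derivative p) = 0
  · have hdeg : p.natDegree ≠ 0 := by
      intro hd
      obtain ⟨a, rfl⟩ := natDegree_eq_zero.mp hd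
      rw [aeval_C, ← map_zero (algebraMap A S)] at hpx
      exact hp0 (by rw [hinj hpx, map_zero])
    exact ih _ (h ▸ natDegree_derivative_lt hdeg) _ (derivative_ne_zero.mpr hdeg) hp' rfl
  · exact ⟨p, hpx, hp'⟩

namespace MvPolynomial

section

open Finsupp

variable {k R σ G : Type*} [CommRing k] [CommRing R] [Algebra k R]
  [AddCommGroup G] [LinearOrder G]
  (w : σ → G) (D : Derivation k (MvPolynomial σ R) (MvPolynomial σ R)) (M : WithBot G)

def DerivDegLE (y : MvPolynomial σ R) (α : WithBot G) : Prop :=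
  weightedTotalDegree' w y ≤ α ∧ weightedTotalDegree' w (D y) ≤ M + α

variable {w D M}

theorem DerivDegLE.add {y z : MvPolynomial σ R} {α : WithBot G} (hy : DerivDegLE w D M y α)
    (hz : DerivDegLE w D M z α) : DerivDegLE w D M (y + z) α :=
  ⟨(weightedTotalDegree'_add_le w y z).trans (max_le hy.1 hz.1),
    (map_add D y z ▸ weightedTotalDegree'_add_le w _ _).trans (max_le hy.2 hz.2)⟩

theorem DerivDegLE.sum {ι : Type*} {s : Finset ι} {f : ι → MvPolynomial σ R} {α : WithBot G}
    (h : ∀ i ∈ s, DerivDegLE w D M (f i) α) : DerivDegLE w D M (∑ i ∈ s, f i) α :=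
  ⟨(weightedTotalDegree'_sum_le w s f).trans (Finset.sup_le fun i hi => (h i hi).1),
    (map_sum D f s ▸ weightedTotalDegree'_sum_le w s _).trans
      (Finset.sup_le fun i hi => (h i hi).2)⟩

theorem derivDegLE_one : DerivDegLE w D M 1 0 :=
  ⟨weightedTotalDegree'_C_le w 1, by simp [weightedTotalDegree'_zero]⟩

variable [IsOrderedAddMonoid G]

theorem DerivDegLE.mono {y : MvPolynomial σ R} {α β : WithBot G} (h : DerivDegLE w D M y α)
    (hαβ : α ≤ β) : DerivDegLE w D M y β :=
  ⟨h.1.trans hαβ, h.2.trans (add_le_add le_rfl hαβ)⟩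

theorem DerivDegLE.mul {y z : MvPolynomial σ R} {α β : WithBot G} (hy : DerivDegLE w D M y α)
    (hz : DerivDegLE w D M z β) : DerivDegLE w D M (y * z) (α + β) := by
  refine ⟨(weightedTotalDegree'_mul_le w y z).trans (add_le_add hy.1 hz.1), ?_⟩
  rw [D.leibniz, smul_eq_mul, smul_eq_mul]
  refine (weightedTotalDegree'_add_le w _ _).trans (max_le ?_ ?_)
  · calc weightedTotalDegree' w (y * D z) ≤ α + (M + β) :=
          (weightedTotalDegree'_mul_le w _ _).trans (add_le_add hy.1 hz.2)
      _ = M + (α + β) := add_left_comm _ _ _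
  · calc weightedTotalDegree' w (z * D y) ≤ β + (M + α) :=
          (weightedTotalDegree'_mul_le w _ _).trans (add_le_add hz.1 hy.2)
      _ = M + (α + β) := by rw [add_left_comm, add_comm β]

theorem DerivDegLE.pow {y : MvPolynomial σ R} {α : WithBot G} (h : DerivDegLE w D M y α)
    (n : ℕ) : DerivDegLE w D M (y ^ n) (n • α) := by
  induction n with
  | zero => simpa using derivDegLE_one
  | succ n ih => simpa [pow_succ, succ_nsmul] using ih.mul h

theorem DerivDegLE.prod {ι : Type*} {s : Finset ι} {f : ι → MvPolynomial σ R}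
    {α : ι → WithBot G} (h : ∀ i ∈ s, DerivDegLE w D M (f i) (α i)) :
    DerivDegLE w D M (∏ i ∈ s, f i) (∑ i ∈ s, α i) := by
  classical
  induction s using Finset.induction_on with
  | empty => simpa using derivDegLE_one
  | insert i s hi ih =>
    rw [Finset.prod_insert hi, Finset.sum_insert hi]
    exact (h i (s.mem_insert_self i)).mul (ih fun j hj => h j (Finset.mem_insert_of_mem hj))

theorem derivDegLE_monomial {s : σ →₀ ℕ} {c : R} (hC : DerivDegLE w D M (C c) 0)
    (hX : ∀ i, DerivDegLE w D M (X i) (w i)) : DerivDegLE w D M (monomial s c) (weight w s) := by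
  rw [monomial_eq, Finsupp.prod, weight_apply, Finsupp.sum, WithBot.coe_sum]
  simp only [WithBot.coe_nsmul]
  simpa only [zero_add] using hC.mul (DerivDegLE.prod fun i _ => (hX i).pow (s i))

theorem derivDegLE_weightedTotalDegree' (hC : ∀ c, DerivDegLE w D M (C c) 0)
    (hX : ∀ i, DerivDegLE w D M (X i) (w i)) (p : MvPolynomial σ R) :
    DerivDegLE w D M p (weightedTotalDegree' w p) := by
  conv_lhs => rw [← support_sum_monomial_coeff p]
  exact DerivDegLE.sum fun s hs =>
    (derivDegLE_monomial (hC _) hX).mono (Finset.le_sup (f := fun t => (weight w t : WithBot G)) hs)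

variable (w D M) in
def derivBoundedCoeffs : Subalgebra k R where
  carrier := {r | DerivDegLE w D M (C r) 0}
  mul_mem' {a b} ha hb := by simpa only [Set.mem_ofPred_eq, map_mul, add_zero] using ha.mul hb
  add_mem' ha hb := by simpa only [Set.mem_ofPred_eq, map_add] using ha.add hb
  algebraMap_mem' c := by
    refine ⟨weightedTotalDegree'_C_le w _, ?_⟩
    rw [← algebraMap_apply, Derivation.map_algebraMap, weightedTotalDegree'_zero]
    exact bot_le

theorem weightedTotalDegree'_eval_mapCoeffs_le (r : R) {Q : Polynomial (MvPolynomial σ R)}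
    (hQ : ∀ i, weightedTotalDegree' w (D (Q.coeff i)) ≤ M) :
    weightedTotalDegree' w (PolynomialModule.eval (C r) (D.mapCoeffs Q)) ≤ M := by
  refine (weightedTotalDegree'_sum_le w _ _).trans (Finset.sup_le fun i _ => ?_)
  dsimp only
  rw [smul_eq_mul, ← map_pow, Derivation.mapCoeffs_apply]
  calc weightedTotalDegree' w (C (r ^ i) * D (Q.coeff i)) ≤ 0 + M :=
        (weightedTotalDegree'_mul_le w _ _).trans
          (add_le_add (weightedTotalDegree'_C_le w _) (hQ i))
    _ = M := zero_add M

theorem mem_derivBoundedCoeffs_of_isAlgebraic [IsDomain R] [CharZero R] {A : Subalgebra k R}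
    (hA : A ≤ derivBoundedCoeffs w D M) {r : R} (hr : IsAlgebraic A r) :
    r ∈ derivBoundedCoeffs w D M := by
  obtain ⟨p, hpr, hp'r⟩ :=
    hr.exists_aeval_eq_zero_aeval_derivative_ne_zero Subtype.val_injective
  have eval_map_C : ∀ q : Polynomial A,
      (q.map (algebraMap A (MvPolynomial σ R))).eval (C r) = C (Polynomial.aeval r q) := by
    intro q
    rw [Polynomial.eval_map_algebraMap, ← algebraMap_eq, Polynomial.aeval_algebraMap_apply,
      algebraMap_eq]
  have hD := D.apply_eval_eq (C r) (p.map (algebraMap A (MvPolynomial σ R)))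
  rw [eval_map_C, hpr, map_zero, map_zero, Polynomial.derivative_map, eval_map_C, smul_eq_mul,
    eq_comm, add_eq_zero_iff_eq_neg'] at hD
  refine ⟨weightedTotalDegree'_C_le w r, ?_⟩
  rw [add_zero, ← weightedTotalDegree'_C_mul w hp'r, hD, weightedTotalDegree'_neg]
  refine weightedTotalDegree'_eval_mapCoeffs_le r fun i => ?_
  rw [Polynomial.coeff_map]
  simpa using (hA (p.coeff i).2).2

end

theorem isGreatest_degDeltaSet_weightedTotalDegree' {k R σ G ι : Type*} [Field k] [CharZero k]
    [CommRing R] [IsDomain R] [Algebra k R] [Fintype σ] [Fintype ι] [AddCommGroup G]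
    [LinearOrder G] [IsOrderedAddMonoid G] (w : σ → G) (z : ι → R)
    (hz : ∀ r : R, IsAlgebraic (Algebra.adjoin k (Set.range z)) r)
    (D : Derivation k (MvPolynomial σ R) (MvPolynomial σ R)) :
    IsGreatest (degDeltaSet (weightedTotalDegree' w) D)
      ((Finset.univ.sup fun j => degDelta (weightedTotalDegree' w) D (C (z j))) ⊔
        (Finset.univ.sup fun i => degDelta (weightedTotalDegree' w) D (X i))) := by
  have : CharZero R := charZero_of_injective_algebraMap (algebraMap k R).injective
  set M := (Finset.univ.sup fun j => degDelta (weightedTotalDegree' w) D (C (z j))) ⊔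
    (Finset.univ.sup fun i => degDelta (weightedTotalDegree' w) D (X i))
  have hdeg0 : weightedTotalDegree' w (0 : MvPolynomial σ R) = ⊥ := weightedTotalDegree'_zero w
  have hne {x : MvPolynomial σ R} (hx : x ≠ 0) : weightedTotalDegree' w x ≠ ⊥ :=
    (weightedTotalDegree'_eq_bot_iff w x).not.mpr hx
  have of_degDelta_le {x : MvPolynomial σ R} (hx : x ≠ 0)
      (h : degDelta (weightedTotalDegree' w) D x ≤ M) :
      DerivDegLE w D M x (weightedTotalDegree' w x) :=
    ⟨le_rfl, (degDelta_le_iff (hne hx)).mp h⟩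
  have hX (i : σ) : DerivDegLE w D M (X i) (w i) :=
    (of_degDelta_le (X_ne_zero i) (le_sup_of_le_right
      (Finset.le_sup (f := fun i => degDelta _ D (X i)) (Finset.mem_univ i)))).mono
      (weightedTotalDegree'_X_le w i)
  have hz_mem (j : ι) : z j ∈ derivBoundedCoeffs w D M := by
    obtain hzj | hzj := eq_or_ne (z j) 0
    · exact hzj ▸ zero_mem _
    · exact (of_degDelta_le (C_ne_zero.mpr hzj) (le_sup_of_le_left
        (Finset.le_sup (f := fun j => degDelta _ D (C (z j))) (Finset.mem_univ j)))).mono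
        (weightedTotalDegree'_C_le w _)
  have hC (c : R) : DerivDegLE w D M (C c) 0 :=
    mem_derivBoundedCoeffs_of_isAlgebraic
      (Algebra.adjoin_le (Set.range_subset_iff.mpr hz_mem)) (hz c)
  refine ⟨sup_ind _ _ (Finset.sup_degDelta_mem_degDeltaSet hdeg0 D _ _)
    (Finset.sup_degDelta_mem_degDeltaSet hdeg0 D _ _), ?_⟩
  rintro _ ⟨x, hx, rfl⟩
  exact (degDelta_le_iff (hne hx)).mpr (derivDegLE_weightedTotalDegree' hC hX x).2

end MvPolynomial

theorem stmt13 {k R G : Type*} [Field k] [CharZero k] [CommRing R] [IsDomain R]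
    [Algebra k R] [AddCommGroup G] [LinearOrder G] [IsOrderedAddMonoid G]
    -- R has finite transcendence degree over k
    (htrdeg : ∃ (N : ℕ) (w : Fin N → R), ∀ r : R,
      IsAlgebraic (↥(Algebra.adjoin k (Set.range w))) r)
    (n : ℕ) (d : Fin n → G)
    -- deg is the degree function determined by the grading of R[X₁,…,Xₙ] in which
    -- nonzero elements of R have degree 0 and Xᵢ has degree dᵢ
    (deg : MvPolynomial (Fin n) R → WithBot G)
    (hdeg0 : deg 0 = ⊥)
    (hdeg : ∀ p : MvPolynomial (Fin n) R, p ≠ 0 →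
      (∀ mo ∈ p.support, ((∑ i : Fin n, mo i • d i : G) : WithBot G) ≤ deg p) ∧
      (∃ mo ∈ p.support, deg p = ((∑ i : Fin n, mo i • d i : G) : WithBot G))) :
    -- deg is tame over k:
    (∀ D : Derivation k (MvPolynomial (Fin n) R) (MvPolynomial (Fin n) R),
      DegreeDefinedAt deg ⇑D) ∧
    -- more precisely:
    (∀ (m : ℕ) (z : Fin m → R),
      (∀ r : R, IsAlgebraic (↥(Algebra.adjoin k (Set.range z))) r) →
      ∀ D : Derivation k (MvPolynomial (Fin n) R) (MvPolynomial (Fin n) R),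
        IsGreatest (degDeltaSet deg ⇑D)
          ((Finset.univ.sup fun j => degDelta deg ⇑D (MvPolynomial.C (z j))) ⊔
            (Finset.univ.sup fun i => degDelta deg ⇑D (MvPolynomial.X i)))) := by
  obtain rfl := MvPolynomial.eq_weightedTotalDegree' hdeg0 hdeg
  obtain ⟨N, w, hw⟩ := htrdeg
  exact ⟨fun D => ⟨_, MvPolynomial.isGreatest_degDeltaSet_weightedTotalDegree' d w hw D⟩,
    fun m z hz D => MvPolynomial.isGreatest_degDeltaSet_weightedTotalDegree' d z hz D⟩
end
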